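/- arXiv:1711.04359 — 6 statements merged into one kernel-verified Lean document; each statement's English description precedes it below -/
import Mathlib

section
/- Let π_1 and π_2 be disjoint finite sets of points in a metric space with |π_1| = n_1 ≥ 2 and |π_2| = n_2 ≥ 1, and let a ∈ π_1. Define the within-cluster dispersion of a set S of size m as W(S) = (m/2)·(1/m^2)∑_{x∈S}∑_{y∈S} d(x,y)^α. Then [W(π_1) + W(π_2)] - [W(π_1 \ {a}) + W(π_2 ∪ {a})] = (n_1/(2(n_1-1)))·ξ(a, π_1) - (n_2/(2(n_2+1)))·ξ(a, π_2), where ξ(a, S) = (2/|S|)∑_{x∈S} d(a,x)^α - (1/|S|^2)∑_{x∈S}∑_{y∈S} d(x,y)^α. -/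
open Finset

/-- First variation update formula (Theorem 1): moving a point `a` from `π₁` to `π₂`,
`[W(π₁)+W(π₂)] - [W(π₁\{a}) + W(π₂∪{a})]
  = (n₁/(2(n₁-1)))·ξ(a,π₁) - (n₂/(2(n₂+1)))·ξ(a,π₂)`. -/
theorem kgroups_first_variation
    {X : Type*} [MetricSpace X] [DecidableEq X] (α : ℝ) (hα : 0 < α)
    (π₁ π₂ : Finset X) (hdisj : Disjoint π₁ π₂)
    (n₁ n₂ : ℕ) (hn₁ : π₁.card = n₁) (hn₂ : π₂.card = n₂)
    (hn₁2 : 2 ≤ n₁) (hn₂1 : 1 ≤ n₂) (a : X) (ha : a ∈ π₁) :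
    (((n₁ : ℝ) / 2) * ((1 / (n₁ : ℝ) ^ 2) * ∑ x ∈ π₁, ∑ y ∈ π₁, dist x y ^ α)
        + ((n₂ : ℝ) / 2) * ((1 / (n₂ : ℝ) ^ 2) * ∑ x ∈ π₂, ∑ y ∈ π₂, dist x y ^ α))
      - ((((n₁ : ℝ) - 1) / 2) *
            ((1 / ((n₁ : ℝ) - 1) ^ 2) *
              ∑ x ∈ π₁.erase a, ∑ y ∈ π₁.erase a, dist x y ^ α)
          + (((n₂ : ℝ) + 1) / 2) *
            ((1 / ((n₂ : ℝ) + 1) ^ 2) *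
              ∑ x ∈ insert a π₂, ∑ y ∈ insert a π₂, dist x y ^ α))
      = ((n₁ : ℝ) / (2 * ((n₁ : ℝ) - 1))) *
          ((2 / (n₁ : ℝ)) * (∑ x ∈ π₁, dist a x ^ α)
            - (1 / (n₁ : ℝ) ^ 2) * ∑ x ∈ π₁, ∑ y ∈ π₁, dist x y ^ α)
        - ((n₂ : ℝ) / (2 * ((n₂ : ℝ) + 1))) *
          ((2 / (n₂ : ℝ)) * (∑ x ∈ π₂, dist a x ^ α)
            - (1 / (n₂ : ℝ) ^ 2) * ∑ x ∈ π₂, ∑ y ∈ π₂, dist x y ^ α) := by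
  have ha2 : a ∉ π₂ := fun h => Finset.disjoint_left.mp hdisj ha h
  have ha1 : a ∉ π₁.erase a := Finset.notMem_erase a π₁
  have hz : dist a a ^ α = 0 := by
    simp [Real.zero_rpow hα.ne']
  set S₁ := ∑ x ∈ π₁, ∑ y ∈ π₁, dist x y ^ α with hS₁
  set S₂ := ∑ x ∈ π₂, ∑ y ∈ π₂, dist x y ^ α with hS₂
  set T₁ := ∑ x ∈ π₁, dist a x ^ α with hT₁
  set T₂ := ∑ x ∈ π₂, dist a x ^ α with hT₂
  -- T₁ restricted to erase
  have hT₁' : ∑ x ∈ π₁.erase a, dist a x ^ α = T₁ := by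
    rw [hT₁]
    conv_rhs => rw [← Finset.insert_erase ha, Finset.sum_insert ha1]
    rw [hz, zero_add]
  have hS₁split : S₁ = ∑ x ∈ π₁.erase a, ∑ y ∈ π₁.erase a, dist x y ^ α + 2 * T₁ := by
    rw [hS₁]
    conv_lhs => rw [← Finset.insert_erase ha]
    rw [Finset.sum_insert ha1, Finset.sum_insert ha1, hz, zero_add]
    have : ∀ x ∈ π₁.erase a, (∑ y ∈ insert a (π₁.erase a), dist x y ^ α)
        = dist a x ^ α + ∑ y ∈ π₁.erase a, dist x y ^ α := by
      intro x _
      rw [Finset.sum_insert ha1, dist_comm]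
    rw [Finset.sum_congr rfl this, Finset.sum_add_distrib, hT₁']
    ring
  have hins : ∑ x ∈ insert a π₂, ∑ y ∈ insert a π₂, dist x y ^ α = S₂ + 2 * T₂ := by
    rw [Finset.sum_insert ha2, Finset.sum_insert ha2, hz, zero_add]
    have : ∀ x ∈ π₂, (∑ y ∈ insert a π₂, dist x y ^ α)
        = dist a x ^ α + ∑ y ∈ π₂, dist x y ^ α := by
      intro x _
      rw [Finset.sum_insert ha2, dist_comm]
    rw [Finset.sum_congr rfl this, Finset.sum_add_distrib, ← hT₂, ← hS₂]
    ring
  have hE : ∑ x ∈ π₁.erase a, ∑ y ∈ π₁.erase a, dist x y ^ α = S₁ - 2 * T₁ := by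
    rw [hS₁split]; ring
  rw [hE, hins]
  have h₁ : (1:ℝ) ≤ (n₁:ℝ) - 1 := by
    have : (2:ℝ) ≤ (n₁:ℝ) := by exact_mod_cast hn₁2
    linarith
  have hn₁0 : (n₁:ℝ) ≠ 0 := by positivity
  have hn₁1 : (n₁:ℝ) - 1 ≠ 0 := by linarith
  have hn₂0 : (n₂:ℝ) ≠ 0 := by
    have : (1:ℝ) ≤ (n₂:ℝ) := by exact_mod_cast hn₂1
    linarith
  have hn₂1' : (n₂:ℝ) + 1 ≠ 0 := by positivity
  field_simp
  ring
end

section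
/- For finite nonempty sets π_1,...,π_k of points in a metric space with union U of total size N, define G(A,B) = (1/(|A||B|))∑_{a∈A}∑_{b∈B} d(a,b)^α, T = (N/2)·G(U,U), W = ∑_j (n_j/2)·G(π_j,π_j), and B = ∑_{i<j} (n_i n_j/(2N))·(2G(π_i,π_j) - G(π_i,π_i) - G(π_j,π_j)). Then T = W + B. -/
open Finset

/-- Half-sum lemma: for symmetric `g` with zero diagonal,
the strict upper-triangular sum is half the full sum. -/
lemma half_sum_aux {k : ℕ} (g : Fin k → Fin k → ℝ) (hs : ∀ i j, g i j = g j i)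
    (hd : ∀ i, g i i = 0) :
    ∑ i, ∑ j, (if i < j then g i j else 0) = (1/2) * ∑ i, ∑ j, g i j := by
  have swap : ∑ i, ∑ j, (if j < i then g i j else 0)
      = ∑ i, ∑ j, (if i < j then g i j else 0) := by
    rw [Finset.sum_comm]
    refine Finset.sum_congr rfl fun i _ => Finset.sum_congr rfl fun j _ => ?_
    by_cases h : i < j <;> simp [h, hs i j]
  have key : ∑ i, ∑ j, g i j
      = ∑ i, ∑ j, ((if i < j then g i j else 0) + (if j < i then g i j else 0)) := by
    refine Finset.sum_congr rfl fun i _ => Finset.sum_congr rfl fun j _ => ?_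
    rcases lt_trichotomy i j with h | h | h
    · simp [h, not_lt_of_gt h]
    · subst h; simp [hd]
    · simp [h, not_lt_of_gt h]
  simp only [Finset.sum_add_distrib] at key
  rw [swap] at key
  linarith [key]

lemma disco_term_aux (a b c sij sii sjj : ℝ) (ha : a ≠ 0) (hb : b ≠ 0) (hc : c ≠ 0) :
    a * b / (2 * c) * (2 * (1 / (a * b) * sij) - 1 / (a * a) * sii - 1 / (b * b) * sjj)
      = sij / c - sii / a / (2 * c) * b - a / (2 * c) * (sjj / b) := by
  field_simp

lemma disco_W_aux (a s : ℝ) (ha : a ≠ 0) :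
    (a / 2) * (1 / (a * a) * s) = (s / a) / 2 := by
  field_simp

/-- Pure algebraic core of the disco decomposition. -/
lemma disco_algebra {k : ℕ} [Nonempty (Fin k)] (n : Fin k → ℝ) (hn : ∀ i, n i ≠ 0)
    (N : ℝ) (hNs : N = ∑ i, n i) (hNne : N ≠ 0)
    (S : Fin k → Fin k → ℝ) (hsymm : ∀ i j, S i j = S j i) :
    (N / 2) * (1 / (N * N) * ∑ i, ∑ j, S i j)
      = (∑ j, (n j / 2) * (1 / (n j * n j) * S j j))
        + ∑ i, ∑ j, if i < j then
            (n i * n j / (2 * N)) *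
              (2 * (1 / (n i * n j) * S i j) - 1 / (n i * n i) * S i i
                - 1 / (n j * n j) * S j j)
          else 0 := by
  set T := ∑ i, ∑ j, S i j with hT
  set C := ∑ i, S i i / n i with hC
  have hs : ∀ i j : Fin k,
      (n i * n j / (2 * N)) *
        (2 * (1 / (n i * n j) * S i j) - 1 / (n i * n i) * S i i
          - 1 / (n j * n j) * S j j)
      = (n j * n i / (2 * N)) *
        (2 * (1 / (n j * n i) * S j i) - 1 / (n j * n j) * S j j
          - 1 / (n i * n i) * S i i) := by
    intro i j
    rw [hsymm i j]; ring
  have hd : ∀ i : Fin k,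
      (n i * n i / (2 * N)) *
        (2 * (1 / (n i * n i) * S i i) - 1 / (n i * n i) * S i i
          - 1 / (n i * n i) * S i i) = 0 := by
    intro i; ring
  rw [show (∑ i, ∑ j, if i < j then
            (n i * n j / (2 * N)) *
              (2 * (1 / (n i * n j) * S i j) - 1 / (n i * n i) * S i i
                - 1 / (n j * n j) * S j j)
          else 0)
      = (1/2) * ∑ i, ∑ j,
            (n i * n j / (2 * N)) *
              (2 * (1 / (n i * n j) * S i j) - 1 / (n i * n i) * S i i
                - 1 / (n j * n j) * S j j)
    from half_sum_aux _ hs hd]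
  have hterm : ∀ i j : Fin k,
      (n i * n j / (2 * N)) *
        (2 * (1 / (n i * n j) * S i j) - 1 / (n i * n i) * S i i
          - 1 / (n j * n j) * S j j)
      = S i j / N - (S i i / n i) / (2 * N) * n j - n i / (2 * N) * (S j j / n j) := by
    intro i j
    exact disco_term_aux _ _ _ _ _ _ (hn i) (hn j) hNne
  have hrow : ∀ i : Fin k, ∑ j, ((n i * n j / (2 * N)) *
        (2 * (1 / (n i * n j) * S i j) - 1 / (n i * n i) * S i i
          - 1 / (n j * n j) * S j j))
      = (∑ j, S i j) / N - (S i i / n i) / (2 * N) * N - n i / (2 * N) * C := by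
    intro i
    simp only [hterm, Finset.sum_sub_distrib, ← Finset.sum_div, ← Finset.mul_sum, ← hNs, hC]
  have hdouble : (∑ i, ∑ j, (n i * n j / (2 * N)) *
        (2 * (1 / (n i * n j) * S i j) - 1 / (n i * n i) * S i i
          - 1 / (n j * n j) * S j j))
      = T / N - C / (2 * N) * N - N / (2 * N) * C := by
    simp only [hrow, Finset.sum_sub_distrib, ← Finset.sum_div, ← Finset.sum_mul, ← hNs,
      ← hC, ← hT]
  rw [hdouble]
  have hW : ∀ j : Fin k, (n j / 2) * (1 / (n j * n j) * S j j) = (S j j / n j) / 2 := by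
    intro j
    exact disco_W_aux _ _ (hn j)
  have hWsum : (∑ j, (n j / 2) * (1 / (n j * n j) * S j j)) = C / 2 := by
    simp only [hW, ← Finset.sum_div, ← hC]
  rw [hWsum]
  field_simp
  ring

/-- Disco decomposition: for pairwise disjoint nonempty clusters `π₁,…,π_k` with
union `U` of total size `N`, the total dispersion `T = (N/2)·G(U,U)` decomposes as
`T = W + B` with `W = ∑ⱼ (nⱼ/2)·G(πⱼ,πⱼ)` and
`B = ∑_{i<j} (nᵢnⱼ/(2N))·(2G(πᵢ,πⱼ) - G(πᵢ,πᵢ) - G(πⱼ,πⱼ))`. -/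
theorem disco_decomposition
    {X : Type*} [MetricSpace X] [DecidableEq X] (α : ℝ) (hα : 0 < α)
    (k : ℕ) (π : Fin k → Finset X)
    (hne : ∀ i, (π i).Nonempty)
    (hdisj : ∀ i j, i ≠ j → Disjoint (π i) (π j))
    (U : Finset X) (hU : U = Finset.univ.biUnion π)
    (N : ℕ) (hN : N = ∑ i, (π i).card)
    (G : Finset X → Finset X → ℝ)
    (hG : ∀ A B, G A B =
      (1 / ((A.card : ℝ) * B.card)) * ∑ a ∈ A, ∑ b ∈ B, dist a b ^ α) :
    ((N : ℝ) / 2) * G U U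
      = (∑ j, (((π j).card : ℝ) / 2) * G (π j) (π j))
        + ∑ i, ∑ j, if i < j then
            (((π i).card : ℝ) * ((π j).card : ℝ) / (2 * N)) *
              (2 * G (π i) (π j) - G (π i) (π i) - G (π j) (π j))
          else 0 := by
  classical
  rcases isEmpty_or_nonempty (Fin k) with hk | hk
  · have hN0 : N = 0 := by simp [hN]
    simp [hN0]
  · have hnne : ∀ i, ((π i).card : ℝ) ≠ 0 := fun i =>
      Nat.cast_ne_zero.mpr (Finset.card_pos.mpr (hne i)).ne'
    have hNposn : 0 < N := by
      obtain ⟨i₀⟩ := hk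
      rw [hN]
      exact lt_of_lt_of_le (Finset.card_pos.mpr (hne i₀))
        (Finset.single_le_sum (f := fun i => (π i).card) (fun _ _ => Nat.zero_le _)
          (Finset.mem_univ i₀))
    have hNne : ((N : ℝ)) ≠ 0 := Nat.cast_ne_zero.mpr hNposn.ne'
    set S : Fin k → Fin k → ℝ := fun i j => ∑ a ∈ π i, ∑ b ∈ π j, dist a b ^ α with hSdef
    have hSsymm : ∀ i j, S i j = S j i := by
      intro i j
      simp only [hSdef]
      rw [Finset.sum_comm]
      exact Finset.sum_congr rfl fun b _ => Finset.sum_congr rfl fun a _ => by rw [dist_comm]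
    have hpd : ∀ i ∈ (Finset.univ : Finset (Fin k)), ∀ j ∈ Finset.univ, i ≠ j →
        Disjoint (π i) (π j) := fun i _ j _ hij => hdisj i j hij
    have hUcard : ((U.card : ℝ)) = (N : ℝ) := by
      rw [hU, Finset.card_biUnion hpd, hN]
    have hUsum : ∀ f : X → ℝ, ∑ a ∈ U, f a = ∑ i, ∑ a ∈ π i, f a := by
      intro f; rw [hU]; exact Finset.sum_biUnion hpd
    have hT : ∑ a ∈ U, ∑ b ∈ U, dist a b ^ α = ∑ i, ∑ j, S i j := by
      rw [hUsum]
      refine Finset.sum_congr rfl fun i _ => ?_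
      calc ∑ a ∈ π i, ∑ b ∈ U, dist a b ^ α
          = ∑ a ∈ π i, ∑ j, ∑ b ∈ π j, dist a b ^ α :=
            Finset.sum_congr rfl fun a _ => hUsum _
        _ = ∑ j, ∑ a ∈ π i, ∑ b ∈ π j, dist a b ^ α := Finset.sum_comm
        _ = ∑ j, S i j := rfl
    have hNs : ((N : ℝ)) = ∑ i, ((π i).card : ℝ) := by
      rw [hN]; push_cast; rfl
    simp only [hG, hUcard, hT]
    exact disco_algebra (fun i => ((π i).card : ℝ)) hnne (N : ℝ) hNs hNne S hSsymm
end

section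
/- For independent real-valued random variables X and Y with E|X| < ∞ and E|Y| < ∞, the energy distance 2E|X-Y| - E|X-X'| - E|Y-Y'| is nonnegative, where X', Y' are independent copies of X, Y respectively. -/
open MeasureTheory ProbabilityTheory Set
open scoped ENNReal NNReal

/-!
Layer cake: `|x - y|` is the Lebesgue measure of `{t | x ≤ t < y ∨ y ≤ t < x}`, so by Tonelli and
independence `E|X - Y| = ∫ F (1 - G) + (1 - F) G dt` for the distribution functions `F`, `G` of
`X`, `Y`. Hence the energy distance is `2 ∫ (F - G)² dt ≥ 0`, and it suffices to compare the
integrands pointwise.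
-/

theorem Real.volume_Ico_union_Ico_swap (x y : ℝ) :
    volume (Ico x y ∪ Ico y x) = ENNReal.ofReal |x - y| := by
  rcases le_total x y with h | h
  · simp [Ico_eq_empty_of_le h, abs_of_nonpos (sub_nonpos.2 h)]
  · simp [Ico_eq_empty_of_le h, abs_of_nonneg (sub_nonneg.2 h)]

theorem lintegral_ofReal_abs_sub_prod (ν ρ : Measure ℝ) [SFinite ν] [SFinite ρ] :
    ∫⁻ p, ENNReal.ofReal |p.1 - p.2| ∂(ν.prod ρ)
      = ∫⁻ t, ν (Iic t) * ρ (Ioi t) + ν (Ioi t) * ρ (Iic t) := by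
  let S : Set ((ℝ × ℝ) × ℝ) := {q | q.1 ∈ Iic q.2 ×ˢ Ioi q.2 ∪ Ioi q.2 ×ˢ Iic q.2}
  have hS : MeasurableSet S := by measurability
  have hslice (p : ℝ × ℝ) : Prod.mk p ⁻¹' S = Ico p.1 p.2 ∪ Ico p.2 p.1 := by
    ext t
    simp only [S, mem_union, mem_prod, mem_Iic, mem_Ioi, preimage_ofPred_eq,
      mem_ofPred_eq, mem_Ico]
    tauto
  have hdisj (t : ℝ) : Disjoint (Iic t ×ˢ Ioi t) (Ioi t ×ˢ Iic t) :=
    disjoint_prod.2 (Or.inl (Iic_disjoint_Ioi le_rfl))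
  calc ∫⁻ p, ENNReal.ofReal |p.1 - p.2| ∂(ν.prod ρ)
      = ∫⁻ p, volume (Prod.mk p ⁻¹' S) ∂(ν.prod ρ) := by
        simp only [hslice, Real.volume_Ico_union_Ico_swap]
    _ = ((ν.prod ρ).prod volume) S := (Measure.prod_apply hS).symm
    _ = ∫⁻ t, (ν.prod ρ) ((fun p => (p, t)) ⁻¹' S) := Measure.prod_apply_symm hS
    _ = ∫⁻ t, ν (Iic t) * ρ (Ioi t) + ν (Ioi t) * ρ (Iic t) := by
        refine lintegral_congr fun t => ?_
        rw [← Measure.prod_prod, ← Measure.prod_prod,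
          ← measure_union (hdisj t) (measurableSet_Ioi.prod measurableSet_Iic)]
        rfl

theorem ENNReal.mul_add_mul_add_le_of_add_eq_one {a a' b b' : ℝ≥0∞}
    (ha : a + a' = 1) (hb : b + b' = 1) :
    a * a' + a' * a + (b * b' + b' * b) ≤ 2 * (a * b' + a' * b) := by
  have hfin {c d : ℝ≥0∞} (h : c + d = 1) : c ≠ ⊤ ∧ d ≠ ⊤ := by
    constructor <;> rintro rfl <;> simp at h
  lift a to ℝ≥0 using (hfin ha).1
  lift a' to ℝ≥0 using (hfin ha).2
  lift b to ℝ≥0 using (hfin hb).1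
  lift b' to ℝ≥0 using (hfin hb).2
  norm_cast at *
  rw [← NNReal.coe_le_coe]
  have ha := congrArg NNReal.toReal ha
  have hb := congrArg NNReal.toReal hb
  push_cast at *
  -- the right side minus the left side is `2 (a - b)²`
  nlinarith [sq_nonneg ((a : ℝ) - b)]

theorem lintegral_ofReal_abs_sub_prod_self_add_le (ν ρ : Measure ℝ)
    [IsProbabilityMeasure ν] [IsProbabilityMeasure ρ] :
    ∫⁻ p, ENNReal.ofReal |p.1 - p.2| ∂(ν.prod ν) + ∫⁻ p, ENNReal.ofReal |p.1 - p.2| ∂(ρ.prod ρ)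
      ≤ 2 * ∫⁻ p, ENNReal.ofReal |p.1 - p.2| ∂(ν.prod ρ) := by
  have hsplit (κ : Measure ℝ) [IsProbabilityMeasure κ] (t : ℝ) : κ (Iic t) + κ (Ioi t) = 1 := by
    rw [← compl_Iic]
    exact prob_add_prob_compl measurableSet_Iic
  simp only [lintegral_ofReal_abs_sub_prod]
  rw [← lintegral_const_mul' _ _ (by simp)]
  exact (le_lintegral_add _ _).trans <| lintegral_mono fun t =>
    ENNReal.mul_add_mul_add_le_of_add_eq_one (hsplit ν t) (hsplit ρ t)

theorem ProbabilityTheory.IndepFun.lintegral_comp_eq_lintegral_prod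
    {Ω β γ : Type*} [MeasurableSpace Ω] [MeasurableSpace β] [MeasurableSpace γ]
    {μ : Measure Ω} [IsFiniteMeasure μ] {A : Ω → β} {B : Ω → γ}
    (hAB : IndepFun A B μ) (hA : AEMeasurable A μ) (hB : AEMeasurable B μ)
    {f : β × γ → ℝ≥0∞} (hf : Measurable f) :
    ∫⁻ ω, f (A ω, B ω) ∂μ = ∫⁻ p, f p ∂((μ.map A).prod (μ.map B)) := by
  rw [← hAB.map_prod_eq_prod_map_map hA hB, lintegral_map' hf.aemeasurable (hA.prodMk hB)]

theorem lintegral_ofReal_abs_sub_add_le {Ω : Type*} [MeasurableSpace Ω] {μ : Measure Ω}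
    [IsProbabilityMeasure μ] {X Y X' Y' : Ω → ℝ}
    (hXY : IndepFun X Y μ) (hXX' : IndepFun X X' μ) (hYY' : IndepFun Y Y' μ)
    (hX' : IdentDistrib X' X μ μ) (hY' : IdentDistrib Y' Y μ μ) :
    ∫⁻ ω, ENNReal.ofReal |X ω - X' ω| ∂μ + ∫⁻ ω, ENNReal.ofReal |Y ω - Y' ω| ∂μ
      ≤ 2 * ∫⁻ ω, ENNReal.ofReal |X ω - Y ω| ∂μ := by
  have hX := hX'.aemeasurable_snd
  have hY := hY'.aemeasurable_snd
  have : IsProbabilityMeasure (μ.map X) := Measure.isProbabilityMeasure_map hX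
  have : IsProbabilityMeasure (μ.map Y) := Measure.isProbabilityMeasure_map hY
  have hpair {A B : Ω → ℝ} (hAB : IndepFun A B μ) (hA : AEMeasurable A μ)
      (hB : AEMeasurable B μ) : ∫⁻ ω, ENNReal.ofReal |A ω - B ω| ∂μ
        = ∫⁻ p, ENNReal.ofReal |p.1 - p.2| ∂((μ.map A).prod (μ.map B)) :=
    hAB.lintegral_comp_eq_lintegral_prod hA hB (f := fun p => ENNReal.ofReal |p.1 - p.2|)
      (by fun_prop)
  rw [hpair hXY hX hY, hpair hXX' hX hX'.aemeasurable_fst, hpair hYY' hY hY'.aemeasurable_fst,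
    hX'.map_eq, hY'.map_eq]
  exact lintegral_ofReal_abs_sub_prod_self_add_le _ _

/-- Nonnegativity of the energy distance: for independent integrable real random
variables `X, Y` with independent copies `X', Y'`,
`2E|X-Y| - E|X-X'| - E|Y-Y'| ≥ 0`. -/
theorem energy_distance_nonneg
    {Ω : Type*} [MeasurableSpace Ω] {μ : Measure Ω} [IsProbabilityMeasure μ]
    (X Y X' Y' : Ω → ℝ)
    (hIndep : iIndepFun ![X, Y, X', Y'] μ)
    (hX' : IdentDistrib X' X μ μ) (hY' : IdentDistrib Y' Y μ μ)
    (hX1 : Integrable X μ) (hY1 : Integrable Y μ) :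
    0 ≤ 2 * ∫ ω, |X ω - Y ω| ∂μ - ∫ ω, |X ω - X' ω| ∂μ
        - ∫ ω, |Y ω - Y' ω| ∂μ := by
  have hXY : IndepFun X Y μ := hIndep.indepFun (i := 0) (j := 1) (by decide)
  have hXX' : IndepFun X X' μ := hIndep.indepFun (i := 0) (j := 2) (by decide)
  have hYY' : IndepFun Y Y' μ := hIndep.indepFun (i := 1) (j := 3) (by decide)
  have hlin := lintegral_ofReal_abs_sub_add_le hXY hXX' hYY' hX' hY'
  have hmean {A B : Ω → ℝ} (hA : Integrable A μ) (hB : Integrable B μ) :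
      ∫⁻ ω, ENNReal.ofReal |A ω - B ω| ∂μ = ENNReal.ofReal (∫ ω, |A ω - B ω| ∂μ) :=
    (ofReal_integral_eq_lintegral_ofReal (hA.sub hB).abs (ae_of_all _ fun _ => abs_nonneg _)).symm
  rw [hmean hX1 (hX'.integrable_iff.2 hX1), hmean hY1 (hY'.integrable_iff.2 hY1), hmean hX1 hY1,
    ← ENNReal.ofReal_add (by positivity) (by positivity), ← ENNReal.ofReal_ofNat 2,
    ← ENNReal.ofReal_mul zero_le_two, ENNReal.ofReal_le_ofReal_iff (by positivity)] at hlin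
  linarith
end

section
/- If X and Y are independent integrable real random variables with 2E|X-Y| - E|X-X'| - E|Y-Y'| = 0 (X', Y' independent copies), then X and Y are identically distributed. -/
open MeasureTheory ProbabilityTheory Set ENNReal

/-! Writing `|x - y| = ∫ (𝟙[x ≤ t < y] + 𝟙[y ≤ t < x]) dt` and applying Tonelli, independent
`X ~ F` and `Y ~ G` satisfy `E|X - Y| = ∫ (F (1 - G) + G (1 - F)) dt`. Since
`2 (F (1 - G) + G (1 - F)) = 2 F (1 - F) + 2 G (1 - G) + 2 (F - G)²`, the energy distance equals
`2 ∫ (F - G)² dt`. If it vanishes, `F = G` almost everywhere, hence everywhere by right continuity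
of distribution functions. -/

theorem StieltjesFunction.eq_of_ae_eq {μ : Measure ℝ} [μ.IsOpenPosMeasure]
    {f g : StieltjesFunction ℝ} (h : f =ᵐ[μ] g) : f = g := by
  ext t
  set S := {x | f x = g x}
  have ht : t ∈ closure (Ioi t ∩ S) := by
    have hsub : closure (Ioi t) ⊆ closure (Ioi t ∩ S) :=
      closure_minimal ((μ.dense_of_ae h).open_subset_closure_inter isOpen_Ioi) isClosed_closure
    exact hsub (closure_Ioi t ▸ self_mem_Ici)
  have hc : ContinuousWithinAt (fun x => f x - g x) (Ioi t ∩ S) t :=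
    ((f.right_continuous t).sub (g.right_continuous t)).mono
      (inter_subset_left.trans Ioi_subset_Ici_self)
  have hzero : (fun x => f x - g x) '' (Ioi t ∩ S) ⊆ {0} := by
    rintro _ ⟨x, ⟨-, hx⟩, rfl⟩
    exact sub_eq_zero.2 hx
  have := closure_mono hzero (hc.mem_closure_image ht)
  rwa [closure_singleton, mem_singleton_iff, sub_eq_zero] at this

lemma ENNReal.ofReal_abs (a : ℝ) :
    ENNReal.ofReal |a| = ENNReal.ofReal a + ENNReal.ofReal (-a) := by
  rcases le_total 0 a with h | h
  · simp [abs_of_nonneg h, ENNReal.ofReal_of_nonpos (neg_nonpos.2 h)]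
  · simp [abs_of_nonpos h, ENNReal.ofReal_of_nonpos h]

lemma ProbabilityTheory.ofReal_one_sub_cdf (P : Measure ℝ) [IsProbabilityMeasure P] (t : ℝ) :
    ENNReal.ofReal (1 - cdf P t) = P (Ioi t) := by
  rw [ENNReal.ofReal_sub _ (cdf_nonneg P t), ofReal_one, ofReal_cdf, ← prob_compl_eq_one_sub
    measurableSet_Iic, compl_Iic]

lemma lintegral_ofReal_sub_prod (P Q : Measure ℝ) [SFinite P] [SFinite Q] :
    ∫⁻ p, ENNReal.ofReal (p.2 - p.1) ∂(P.prod Q) = ∫⁻ t, P (Iic t) * Q (Ioi t) := by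
  have hvol (p : ℝ × ℝ) : ENNReal.ofReal (p.2 - p.1) = ∫⁻ t, (Iic t ×ˢ Ioi t).indicator 1 p := by
    rw [← Real.volume_Ico, ← lintegral_indicator_one measurableSet_Ico]
    rfl
  have hmeas : MeasurableSet {q : (ℝ × ℝ) × ℝ | q.1.1 ≤ q.2 ∧ q.2 < q.1.2} :=
    (measurableSet_le measurable_fst.fst measurable_snd).inter
      (measurableSet_lt measurable_snd measurable_fst.snd)
  calc ∫⁻ p, ENNReal.ofReal (p.2 - p.1) ∂(P.prod Q)
      = ∫⁻ t, ∫⁻ p, (Iic t ×ˢ Ioi t).indicator 1 p ∂(P.prod Q) := by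
        simp_rw [hvol]
        exact lintegral_lintegral_swap (f := fun p t => (Iic t ×ˢ Ioi t).indicator 1 p)
          (measurable_one.indicator hmeas).aemeasurable
    _ = ∫⁻ t, P (Iic t) * Q (Ioi t) := by
        simp_rw [lintegral_indicator_one (measurableSet_Iic.prod measurableSet_Ioi),
          Measure.prod_prod]

noncomputable def meanDist (P Q : Measure ℝ) : ℝ≥0∞ :=
  ∫⁻ p, ENNReal.ofReal |p.1 - p.2| ∂(P.prod Q)

section ProbabilityMeasure

variable (P Q : Measure ℝ) [IsProbabilityMeasure P] [IsProbabilityMeasure Q]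

lemma measure_Iic_mul_measure_Ioi (t : ℝ) :
    P (Iic t) * Q (Ioi t) = ENNReal.ofReal (cdf P t * (1 - cdf Q t)) := by
  rw [ENNReal.ofReal_mul (cdf_nonneg P t), ofReal_cdf, ofReal_one_sub_cdf]

lemma meanDist_eq_lintegral_cdf :
    meanDist P Q =
      ∫⁻ t, ENNReal.ofReal (cdf P t * (1 - cdf Q t) + cdf Q t * (1 - cdf P t)) := by
  have hswap : ∫⁻ p, ENNReal.ofReal (p.1 - p.2) ∂(P.prod Q)
      = ∫⁻ p, ENNReal.ofReal (p.2 - p.1) ∂(Q.prod P) :=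
    lintegral_prod_swap (fun p : ℝ × ℝ => ENNReal.ofReal (p.2 - p.1))
  have hnonneg (R S : Measure ℝ) [IsProbabilityMeasure R] [IsProbabilityMeasure S] (t : ℝ) :
      0 ≤ cdf R t * (1 - cdf S t) :=
    mul_nonneg (cdf_nonneg R t) (sub_nonneg.2 (cdf_le_one S t))
  simp_rw [meanDist, ENNReal.ofReal_abs, neg_sub,
    ENNReal.ofReal_add (hnonneg P Q _) (hnonneg Q P _)]
  have hmeas : Measurable fun t => ENNReal.ofReal (cdf P t * (1 - cdf Q t)) := by
    have := (monotone_cdf P).measurable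
    have := (monotone_cdf Q).measurable
    fun_prop
  rw [lintegral_add_left (by fun_prop), hswap, lintegral_ofReal_sub_prod,
    lintegral_ofReal_sub_prod, add_comm]
  simp_rw [measure_Iic_mul_measure_Ioi]
  rw [lintegral_add_left hmeas]

lemma two_mul_meanDist :
    2 * meanDist P Q = meanDist P P + meanDist Q Q
      + 2 * ∫⁻ t, ENNReal.ofReal ((cdf P t - cdf Q t) ^ 2) := by
  have := (monotone_cdf P).measurable
  have := (monotone_cdf Q).measurable
  simp_rw [meanDist_eq_lintegral_cdf]
  rw [← lintegral_const_mul _ (by fun_prop), ← lintegral_const_mul _ (by fun_prop),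
    ← lintegral_add_left (by fun_prop), ← lintegral_add_left (by fun_prop)]
  refine lintegral_congr fun t => ?_
  have := cdf_nonneg P t
  have := cdf_le_one P t
  have := cdf_nonneg Q t
  have := cdf_le_one Q t
  rw [← ENNReal.ofReal_ofNat 2, ← ENNReal.ofReal_mul zero_le_two,
    ← ENNReal.ofReal_mul zero_le_two, ← ENNReal.ofReal_add (by nlinarith) (by nlinarith),
    ← ENNReal.ofReal_add (by nlinarith) (by positivity)]
  congr 1
  ring

lemma eq_of_two_mul_meanDist_eq (hfin : meanDist P Q ≠ ∞)
    (h : 2 * meanDist P Q = meanDist P P + meanDist Q Q) : P = Q := by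
  have hfin' : meanDist P P + meanDist Q Q ≠ ∞ := h ▸ ENNReal.mul_ne_top ofNat_ne_top hfin
  have hzero : ∫⁻ t, ENNReal.ofReal ((cdf P t - cdf Q t) ^ 2) = 0 := by
    have hsplit := two_mul_meanDist P Q
    rw [h] at hsplit
    have htwice := (ENNReal.add_right_inj hfin').1 ((add_zero _).trans hsplit)
    simpa using htwice.symm
  have hae : cdf P =ᵐ[volume] cdf Q := by
    have := (monotone_cdf P).measurable
    have := (monotone_cdf Q).measurable
    filter_upwards [(lintegral_eq_zero_iff (by fun_prop)).1 hzero] with t ht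
    simpa [sub_eq_zero] using ht
  exact Measure.eq_of_cdf P Q (StieltjesFunction.eq_of_ae_eq hae)

end ProbabilityMeasure

lemma ofReal_integral_abs_sub_eq_meanDist {Ω : Type*} [MeasurableSpace Ω] {μ : Measure Ω}
    [IsFiniteMeasure μ] {U V : Ω → ℝ} (hUV : IndepFun U V μ) (hU : Integrable U μ)
    (hV : Integrable V μ) :
    ENNReal.ofReal (∫ ω, |U ω - V ω| ∂μ) = meanDist (μ.map U) (μ.map V) := by
  have hint : Integrable (fun ω => |U ω - V ω|) μ := (hU.sub hV).abs
  rw [ofReal_integral_eq_lintegral_ofReal hint (ae_of_all _ fun _ => abs_nonneg _),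
    meanDist, ← hUV.map_prod_eq_prod_map_map hU.aemeasurable hV.aemeasurable,
    lintegral_map' (by fun_prop) (hU.aemeasurable.prodMk hV.aemeasurable)]

/-- If the energy distance between independent integrable real random variables
`X` and `Y` is zero, then `X` and `Y` are identically distributed. -/
theorem eq_distrib_of_energy_distance_eq_zero
    {Ω : Type*} [MeasurableSpace Ω] {μ : Measure Ω} [IsProbabilityMeasure μ]
    (X Y X' Y' : Ω → ℝ)
    (hIndep : iIndepFun ![X, Y, X', Y'] μ)
    (hX' : IdentDistrib X' X μ μ) (hY' : IdentDistrib Y' Y μ μ)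
    (hX1 : Integrable X μ) (hY1 : Integrable Y μ)
    (h0 : 2 * ∫ ω, |X ω - Y ω| ∂μ - ∫ ω, |X ω - X' ω| ∂μ
        - ∫ ω, |Y ω - Y' ω| ∂μ = 0) :
    μ.map X = μ.map Y := by
  have hXY : IndepFun X Y μ := hIndep.indepFun (show (0 : Fin 4) ≠ 1 by decide)
  have hXX' : IndepFun X X' μ := hIndep.indepFun (show (0 : Fin 4) ≠ 2 by decide)
  have hYY' : IndepFun Y Y' μ := hIndep.indepFun (show (1 : Fin 4) ≠ 3 by decide)
  have hXY_dist := ofReal_integral_abs_sub_eq_meanDist hXY hX1 hY1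
  have hXX'_dist := ofReal_integral_abs_sub_eq_meanDist hXX' hX1 (hX'.integrable_iff.2 hX1)
  have hYY'_dist := ofReal_integral_abs_sub_eq_meanDist hYY' hY1 (hY'.integrable_iff.2 hY1)
  rw [hX'.map_eq] at hXX'_dist
  rw [hY'.map_eq] at hYY'_dist
  have := Measure.isProbabilityMeasure_map (μ := μ) hX1.aemeasurable
  have := Measure.isProbabilityMeasure_map (μ := μ) hY1.aemeasurable
  refine eq_of_two_mul_meanDist_eq _ _ (hXY_dist ▸ ENNReal.ofReal_ne_top) ?_
  rw [← hXY_dist, ← hXX'_dist, ← hYY'_dist, ← ENNReal.ofReal_ofNat 2,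
    ← ENNReal.ofReal_mul zero_le_two, ← ENNReal.ofReal_add (integral_nonneg fun _ => abs_nonneg _)
      (integral_nonneg fun _ => abs_nonneg _)]
  congr 1
  linarith
end

section
/- For any finite sets A, B of points in R^d with |A| = n_1 ≥ 1, |B| = n_2 ≥ 1 and α = 1, the two-sample energy statistic (2/(n_1 n_2))∑_{a∈A}∑_{b∈B}|a-b| - (1/n_1^2)∑_{a,a'∈A}|a-a'| - (1/n_2^2)∑_{b,b'∈B}|b-b'| is nonnegative. -/
/-!
With weights `c` summing to zero, the Euclidean distance is conditionally negative definite: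
`∑ₖ ∑ₗ cₖ cₗ ‖xₖ - xₗ‖ ≤ 0`. The Gaussian kernel `exp (-t ‖x - y‖²)` is the characteristic
function of a rescaled standard Gaussian evaluated at `x - y`, hence positive definite, and
`‖v‖` is a positive multiple of `∫₀^∞ (1 - exp (-(‖v‖ s)²)) / s² ds`. Since `∑ c = 0` kills
the constant `1`, the quadratic form of the distance is minus an integral of quadratic forms of
Gaussian kernels. The energy statistic is minus this quadratic form for the weights `1/n₁` on
`A` and `-1/n₂` on `B`.
-/

open Finset MeasureTheory ProbabilityTheory ComplexConjugate
open scoped ComplexOrder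

theorem integrable_one_sub_exp_neg_mul_sq_div_sq (r : ℝ) :
    Integrable fun s : ℝ ↦ (1 - Real.exp (-(r * s) ^ 2)) / s ^ 2 := by
  have hmeas : Measurable fun s : ℝ ↦ (1 - Real.exp (-(r * s) ^ 2)) / s ^ 2 := by fun_prop
  refine (integrable_inv_one_add_sq.const_mul (r ^ 2 + 1)).mono' hmeas.aestronglyMeasurable
    (Filter.Eventually.of_forall fun s ↦ ?_)
  set u := (r * s) ^ 2
  have h_nonneg : 0 ≤ 1 - Real.exp (-u) :=
    sub_nonneg.mpr (Real.exp_le_one_iff.mpr (neg_nonpos.mpr (sq_nonneg _)))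
  have h_le_u : 1 - Real.exp (-u) ≤ u := by linarith [Real.add_one_le_exp (-u)]
  have h_le_one : 1 - Real.exp (-u) ≤ 1 := by linarith [Real.exp_pos (-u)]
  rw [Real.norm_of_nonneg (div_nonneg h_nonneg (sq_nonneg s))]
  rcases eq_or_ne s 0 with rfl | hs
  · simp; positivity
  rw [← div_eq_mul_inv, div_le_div_iff₀ (by positivity) (by positivity)]
  nlinarith [mul_le_mul_of_nonneg_right h_le_one (sq_nonneg s)]

theorem integral_one_sub_exp_neg_mul_sq_div_sq {r : ℝ} (hr : 0 ≤ r) :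
    ∫ s in Set.Ioi 0, (1 - Real.exp (-(r * s) ^ 2)) / s ^ 2
      = r * ∫ s in Set.Ioi 0, (1 - Real.exp (-s ^ 2)) / s ^ 2 := by
  rcases hr.eq_or_lt with rfl | hr
  · simp
  have hscale := integral_comp_mul_left_Ioi (fun u ↦ (1 - Real.exp (-u ^ 2)) / u ^ 2) 0 hr
  rw [mul_zero, smul_eq_mul] at hscale
  calc ∫ s in Set.Ioi 0, (1 - Real.exp (-(r * s) ^ 2)) / s ^ 2
      = ∫ s in Set.Ioi 0, r ^ 2 * ((1 - Real.exp (-(r * s) ^ 2)) / (r * s) ^ 2) := by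
        congr 1 with s
        rcases eq_or_ne s 0 with rfl | hs
        · simp
        field_simp
    _ = r * ∫ s in Set.Ioi 0, (1 - Real.exp (-s ^ 2)) / s ^ 2 := by
        rw [integral_const_mul, hscale]
        field_simp

theorem integral_one_sub_exp_neg_sq_div_sq_pos :
    0 < ∫ s in Set.Ioi 0, (1 - Real.exp (-s ^ 2)) / s ^ 2 := by
  have hpos : ∀ s : ℝ, 0 < s → 0 < (1 - Real.exp (-s ^ 2)) / s ^ 2 := fun s hs ↦
    div_pos (sub_pos.mpr (Real.exp_lt_one_iff.mpr (by nlinarith))) (by positivity)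
  have hint : Integrable fun s : ℝ ↦ (1 - Real.exp (-s ^ 2)) / s ^ 2 := by
    simpa using integrable_one_sub_exp_neg_mul_sq_div_sq 1
  have hsupp : Set.Ioi 0 ⊆ Function.support fun s : ℝ ↦ (1 - Real.exp (-s ^ 2)) / s ^ 2 :=
    fun s hs ↦ (hpos s hs).ne'
  rw [setIntegral_pos_iff_support_of_nonneg_ae ?_ hint.integrableOn,
    Set.inter_eq_right.mpr hsupp, Real.volume_Ioi]
  · exact ENNReal.zero_lt_top
  · filter_upwards [ae_restrict_mem measurableSet_Ioi] with s hs using (hpos s hs).le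

section

variable {E : Type*} [NormedAddCommGroup E] [InnerProductSpace ℝ E] {ι : Type*} [Fintype ι]

theorem sum_sum_mul_conj_mul_charFun_sub_nonneg [MeasurableSpace E] [OpensMeasurableSpace E]
    (μ : Measure E) [IsFiniteMeasure μ] (c : ι → ℂ) (x : ι → E) :
    0 ≤ ∑ k, ∑ l, c k * conj (c l) * charFun μ (x k - x l) := by
  set e : E → E → ℂ := fun y v ↦ Complex.exp (inner ℝ y v * Complex.I)
  have he : ∀ y k l, e y (x k - x l) = e y (x k) * conj (e y (x l)) := by
    intro y k l
    simp only [e, inner_sub_right, ← Complex.exp_conj, map_mul, Complex.conj_ofReal,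
      Complex.conj_I, ← Complex.exp_add]
    congr 1; push_cast; ring
  have hint : ∀ v, Integrable (e · v) μ := fun v ↦
    (integrable_const (1 : ℝ)).mono (by fun_prop) (by simp [e])
  calc (0 : ℂ) ≤ ((∫ y, Complex.normSq (∑ k, c k * e y (x k)) ∂μ : ℝ) : ℂ) :=
        Complex.zero_le_real.mpr (integral_nonneg fun y ↦ Complex.normSq_nonneg _)
    _ = ∫ y, ∑ k, ∑ l, c k * conj (c l) * e y (x k - x l) ∂μ := by
        rw [← integral_complex_ofReal]
        congr 1 with y
        rw [← Complex.mul_conj, map_sum, sum_mul_sum]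
        exact sum_congr rfl fun k _ ↦ sum_congr rfl fun l _ ↦ by rw [he, map_mul]; ring
    _ = ∑ k, ∑ l, c k * conj (c l) * charFun μ (x k - x l) := by
        rw [integral_finsetSum _ fun k _ ↦
          integrable_finsetSum _ fun l _ ↦ (hint _).const_mul _]
        refine sum_congr rfl fun k _ ↦ ?_
        rw [integral_finsetSum _ fun l _ ↦ (hint _).const_mul _]
        exact sum_congr rfl fun l _ ↦ integral_const_mul _ _

theorem sum_sum_mul_exp_neg_mul_norm_sub_sq_nonneg [FiniteDimensional ℝ E] (c : ι → ℝ)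
    (x : ι → E) {t : ℝ} (ht : 0 ≤ t) :
    0 ≤ ∑ k, ∑ l, c k * c l * Real.exp (-(t * ‖x k - x l‖ ^ 2)) := by
  borelize E
  have hchar : ∀ v : E,
      charFun (stdGaussian E) (√(2 * t) • v) = (Real.exp (-(t * ‖v‖ ^ 2)) : ℂ) := by
    intro v
    have hnorm : ‖√(2 * t) • v‖ ^ 2 = 2 * t * ‖v‖ ^ 2 := by
      rw [norm_smul, mul_pow, Real.norm_eq_abs, sq_abs, Real.sq_sqrt (by positivity)]
    rw [charFun_stdGaussian, ← Complex.ofReal_pow, hnorm]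
    push_cast
    ring_nf
  have h := sum_sum_mul_conj_mul_charFun_sub_nonneg (stdGaussian E) (fun k ↦ (c k : ℂ))
    (fun k ↦ √(2 * t) • x k)
  simp only [Complex.conj_ofReal, ← smul_sub, hchar] at h
  exact_mod_cast h

theorem sum_sum_mul_norm_sub_nonpos [FiniteDimensional ℝ E] (c : ι → ℝ) (hc : ∑ k, c k = 0)
    (x : ι → E) :
    ∑ k, ∑ l, c k * c l * ‖x k - x l‖ ≤ 0 := by
  set φ : ι → ι → ℝ → ℝ := fun k l s ↦
    c k * c l * ((1 - Real.exp (-(‖x k - x l‖ * s) ^ 2)) / s ^ 2)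
  have hφ_nonpos : ∀ s, ∑ k, ∑ l, φ k l s ≤ 0 := by
    intro s
    have hgauss := sum_sum_mul_exp_neg_mul_norm_sub_sq_nonneg c x (sq_nonneg s)
    calc ∑ k, ∑ l, φ k l s
        = ((∑ k, c k) ^ 2 - ∑ k, ∑ l, c k * c l * Real.exp (-(s ^ 2 * ‖x k - x l‖ ^ 2)))
            / s ^ 2 := by
          simp only [φ, sq (∑ k, c k), sum_mul_sum, ← sum_sub_distrib, sum_div]
          exact sum_congr rfl fun k _ ↦ sum_congr rfl fun l _ ↦ by ring_nf
      _ ≤ 0 := div_nonpos_of_nonpos_of_nonneg (by rw [hc]; linarith) (sq_nonneg s)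
  have hrepr : (∫ s in Set.Ioi 0, (1 - Real.exp (-s ^ 2)) / s ^ 2) *
      ∑ k, ∑ l, c k * c l * ‖x k - x l‖ = ∫ s in Set.Ioi 0, ∑ k, ∑ l, φ k l s := by
    have hint : ∀ k l, Integrable (φ k l) (volume.restrict (Set.Ioi 0)) := fun k l ↦
      ((integrable_one_sub_exp_neg_mul_sq_div_sq _).const_mul _).integrableOn
    rw [integral_finsetSum _ fun k _ ↦ integrable_finsetSum _ fun l _ ↦ hint k l, mul_sum]
    refine sum_congr rfl fun k _ ↦ ?_
    rw [integral_finsetSum _ fun l _ ↦ hint k l, mul_sum]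
    refine sum_congr rfl fun l _ ↦ ?_
    rw [integral_const_mul, integral_one_sub_exp_neg_mul_sq_div_sq (norm_nonneg _)]
    ring
  refine nonpos_of_mul_nonpos_right ?_ integral_one_sub_exp_neg_sq_div_sq_pos
  rw [hrepr]
  exact setIntegral_nonpos measurableSet_Ioi fun s _ ↦ hφ_nonpos s

end

/-- Sample version of nonnegativity of the energy distance with `α = 1`: for
finite samples `a : Fin n₁ → ℝᵈ`, `b : Fin n₂ → ℝᵈ`,
`(2/(n₁n₂))∑∑‖aᵢ-bⱼ‖ - (1/n₁²)∑∑‖aᵢ-aⱼ‖ - (1/n₂²)∑∑‖bᵢ-bⱼ‖ ≥ 0`. -/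
theorem sample_energy_statistic_nonneg
    (d n₁ n₂ : ℕ) (hn₁ : 1 ≤ n₁) (hn₂ : 1 ≤ n₂)
    (a : Fin n₁ → EuclideanSpace ℝ (Fin d)) (b : Fin n₂ → EuclideanSpace ℝ (Fin d)) :
    0 ≤ (2 / ((n₁ : ℝ) * n₂)) * ∑ i, ∑ j, ‖a i - b j‖
        - (1 / (n₁ : ℝ) ^ 2) * ∑ i, ∑ j, ‖a i - a j‖
        - (1 / (n₂ : ℝ) ^ 2) * ∑ i, ∑ j, ‖b i - b j‖ := by
  have hn₁_ne : (n₁ : ℝ) ≠ 0 := by positivity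
  have hn₂_ne : (n₂ : ℝ) ≠ 0 := by positivity
  set c : Fin n₁ ⊕ Fin n₂ → ℝ := Sum.elim (fun _ ↦ (n₁ : ℝ)⁻¹) (fun _ ↦ -(n₂ : ℝ)⁻¹)
  have hc : ∑ k, c k = 0 := by simp [c, Fintype.sum_sum_type, hn₁_ne, hn₂_ne]
  have h := sum_sum_mul_norm_sub_nonpos c hc (Sum.elim a b)
  have hBA : ∑ j, ∑ i, ‖b j - a i‖ = ∑ i, ∑ j, ‖a i - b j‖ := by
    rw [sum_comm]; simp_rw [norm_sub_rev]
  simp only [c, Fintype.sum_sum_type, Sum.elim_inl, Sum.elim_inr, sum_add_distrib, ← mul_sum,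
    hBA] at h
  linear_combination h
end

section
/- Let x_1,...,x_n be real numbers and for a point I and the set L = {x_1,...,x_n}, define D(I,L)^2 = (I - (1/n)∑ x_i)^2 and ξ^2(I,L) = (2/n)∑_{i=1}^n (I-x_i)^2 - (1/n^2)∑_{i=1}^n∑_{j=1}^n (x_i-x_j)^2. Then (n/(2(n-1)))·ξ^2(I,L) = n·D(I,L)^2/(n-1) and (n/(2(n+1)))·ξ^2(I,L) = n·D(I,L)^2/(n+1). -/
open Finset

lemma kgroups_key (n : ℕ) (hn : 2 ≤ n) (x : Fin n → ℝ) (I : ℝ) :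
    (2 / (n : ℝ)) * ∑ i, (I - x i) ^ 2
      - (1 / (n : ℝ) ^ 2) * ∑ i, ∑ j, (x i - x j) ^ 2
    = 2 * (I - (∑ i, x i) / n) ^ 2 := by
  have hnpos : (0 : ℝ) < n := by positivity
  have h1 : ∑ i, (I - x i) ^ 2
      = n * I ^ 2 - 2 * I * (∑ i, x i) + ∑ i, (x i) ^ 2 := by
    simp only [sub_sq]
    rw [Finset.sum_add_distrib, Finset.sum_sub_distrib]
    simp [Finset.mul_sum, Finset.sum_const, mul_comm, mul_assoc]
    rw [← Finset.sum_mul]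
  have h2 : ∑ i, ∑ j, (x i - x j) ^ 2
      = 2 * n * (∑ i, (x i) ^ 2) - 2 * (∑ i, x i) ^ 2 := by
    have : ∀ i, ∑ j, (x i - x j) ^ 2
        = n * (x i) ^ 2 - 2 * x i * (∑ j, x j) + ∑ j, (x j) ^ 2 := by
      intro i
      simp only [sub_sq]
      rw [Finset.sum_add_distrib, Finset.sum_sub_distrib]
      simp [Finset.mul_sum, Finset.sum_const, mul_comm, mul_assoc]
      rw [← Finset.sum_mul]
    rw [Finset.sum_congr rfl fun i _ => this i]
    rw [Finset.sum_add_distrib, Finset.sum_sub_distrib, ← Finset.sum_mul,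
      Finset.sum_const, ← Finset.mul_sum,
      show (∑ i, 2 * x i : ℝ) = 2 * ∑ i, x i from by rw [← Finset.mul_sum],
      Finset.card_univ, Fintype.card_fin, nsmul_eq_mul]
    ring
  rw [h1, h2]
  field_simp
  ring
/-- Proposition 3: with `α = 2`, the k-groups updating quantities equal the
Hartigan–Wong k-means updating quantities:
`(n/(2(n-1)))·ξ²(I,L) = n·D(I,L)²/(n-1)` and `(n/(2(n+1)))·ξ²(I,L) = n·D(I,L)²/(n+1)`. -/
theorem kgroups_alpha_two_update_eq_kmeans_update
    (n : ℕ) (hn : 2 ≤ n) (x : Fin n → ℝ) (I : ℝ)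
    (ξ D2 : ℝ)
    (hξ : ξ = (2 / (n : ℝ)) * ∑ i, (I - x i) ^ 2
        - (1 / (n : ℝ) ^ 2) * ∑ i, ∑ j, (x i - x j) ^ 2)
    (hD : D2 = (I - (∑ i, x i) / n) ^ 2) :
    ((n : ℝ) / (2 * ((n : ℝ) - 1))) * ξ = (n : ℝ) * D2 / ((n : ℝ) - 1)
      ∧ ((n : ℝ) / (2 * ((n : ℝ) + 1))) * ξ = (n : ℝ) * D2 / ((n : ℝ) + 1) := by
  have hkey : ξ = 2 * D2 := by rw [hξ, hD, kgroups_key n hn x I]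
  have h1 : (n : ℝ) - 1 ≠ 0 := by
    have : (2 : ℝ) ≤ n := by exact_mod_cast hn
    linarith
  have h2 : (n : ℝ) + 1 ≠ 0 := by positivity
  constructor <;> rw [hkey] <;> field_simp <;> ring
end
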